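/- Fix a weighted matroid (M, w) and p ∈ (0,1), and let R be the random set of improving elements with parameter p. Then every element of the maximum-weight basis OPT_w(E) is in R with probability exactly 1 − p, and hence E[rank_w(R)] ≥ (1 − p)·rank_w(M). -/

import Mathlib

open Finset BigOperators
open scoped Classical

structure FinMatroid (γ : Type*) [DecidableEq γ] [Fintype γ] where
  Indep : Finset γ → Prop
  indep_empty : Indep ∅
  indep_subset : ∀ ⦃A B : Finset γ⦄, Indep B → A ⊆ B → Indep A
  indep_exchange : ∀ ⦃A B : Finset γ⦄, Indep A → Indep B → A.card < B.card →
    ∃ x ∈ B, x ∉ A ∧ Indep (insert x A)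

variable {γ : Type*} [DecidableEq γ] [Fintype γ]

/-- The rank of a set `A`: maximum cardinality of an independent subset of `A`. -/
noncomputable def FinMatroid.rank (M : FinMatroid γ) (A : Finset γ) : ℕ :=
  (A.powerset.filter fun S => M.Indep S).sup Finset.card

/-- The weighted rank of a set `A`: maximum weight of an independent subset of `A`. -/
noncomputable def FinMatroid.wrank (M : FinMatroid γ) (w : γ → ℝ) (A : Finset γ) : ℝ :=
  (A.powerset.filter fun S => M.Indep S).sup'
    ⟨∅, by simp [M.indep_empty]⟩ (fun S => ∑ i ∈ S, w i)

/-- A distribution over subsets of the ground set. -/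
structure FinDist (γ : Type*) [DecidableEq γ] [Fintype γ] where
  p : Finset γ → ℝ
  nonneg : ∀ S, 0 ≤ p S
  sum_one : ∑ S : Finset γ, p S = 1

/-- Marginal probability of element `i` under distribution `D`. -/
noncomputable def FinDist.marg (D : FinDist γ) (i : γ) : ℝ :=
  ∑ R : Finset γ, D.p R * (if i ∈ R then 1 else 0)

/-- A (randomized) contention resolution map: `q R S` is the probability that the map
outputs `S` on input `R`; the output is always an independent subset of the input. -/
structure CRM (M : FinMatroid γ) where
  q : Finset γ → Finset γ → ℝ
  nonneg : ∀ R S, 0 ≤ q R S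
  sum_one : ∀ R, ∑ S : Finset γ, q R S = 1
  feasible : ∀ R S, q R S ≠ 0 → S ⊆ R ∧ M.Indep S

/-- Probability that element `i` is selected by the CRM `φ` when the input is drawn from `D`. -/
noncomputable def selProb (M : FinMatroid γ) (D : FinDist γ) (φ : CRM M) (i : γ) : ℝ :=
  ∑ R : Finset γ, D.p R * ∑ S : Finset γ, φ.q R S * (if i ∈ S then 1 else 0)

/-- `φ` is `a`-competitive for `D` : `Pr[i ∈ R] ≤ a · Pr[i ∈ φ(R)]` for all `i`. -/
def Competitive (M : FinMatroid γ) (D : FinDist γ) (a : ℝ) (φ : CRM M) : Prop :=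
  ∀ i : γ, D.marg i ≤ a * selProb M D φ i

/-- `D` is `a`-uncontentious: it admits an `a`-competitive contention resolution map. -/
def Uncontentious (M : FinMatroid γ) (D : FinDist γ) (a : ℝ) : Prop :=
  ∃ φ : CRM M, Competitive M D a φ

/-- `D` is `a`-uncontentious, weighted-rank form: `E[rank_w(R)] ≥ (1/a)·E[w(R)]` for all `w ≥ 0`. -/
def UncontentiousW (M : FinMatroid γ) (D : FinDist γ) (a : ℝ) : Prop :=
  ∀ w : γ → ℝ, (∀ i, 0 ≤ w i) →
    ∑ R : Finset γ, D.p R * M.wrank w R ≥ (1 / a) * ∑ R : Finset γ, D.p R * ∑ i ∈ R, w i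

/-- Probability of sampling `S` when each of the `n` ground elements is included
independently with probability `p`. -/
noncomputable def prodP (p : ℝ) (S : Finset γ) : ℝ :=
  p ^ S.card * (1 - p) ^ (Fintype.card γ - S.card)

/-- The maximum-weight independent subset of `A` (for distinct positive weights, via the
greedy characterization: `i ∈ OPT_w(A)` iff `w i > 0` and `i` is not spanned by the
higher-weight elements of `A`), excluding zero-weight elements. -/
noncomputable def FinMatroid.OPT (M : FinMatroid γ) (w : γ → ℝ) (A : Finset γ) : Finset γ :=
  A.filter fun i => 0 < w i ∧
    M.rank (A.filter fun j => w i < w j) < M.rank (insert i (A.filter fun j => w i < w j))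

/-- The set of improving elements given the sample `S`: elements outside `S` that
belong to `OPT_w(S ∪ {i})`. -/
noncomputable def FinMatroid.Improving (M : FinMatroid γ) (w : γ → ℝ) (S : Finset γ) : Finset γ :=
  Finset.univ.filter fun i => i ∉ S ∧ i ∈ M.OPT w (insert i S)

/-!
An element `i` of `OPT_w(E)` is not spanned by the elements of `E` heavier than it, so it is not
spanned by the heavier elements of any sample `S` either. Hence `i` is improving exactly when
`i ∉ S`, an event of probability `1 - p`. For the bound on `E[rank_w(R)]`, take a maximum-weight
basis `B`: each of its elements of positive weight lies in `OPT_w(E)` (otherwise it could be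
exchanged for a heavier element), and `B ∩ R` is an independent subset of `R`, so linearity of
expectation gives `E[rank_w(R)] ≥ ∑_{j ∈ B} w j · Pr[j ∈ R] = (1 - p) · w(B)`.
-/

namespace FinMatroid

variable (M : FinMatroid γ)

lemma card_le_rank {A C : Finset γ} (hC : M.Indep C) (hCA : C ⊆ A) : #C ≤ M.rank A :=
  le_sup (mem_filter.2 ⟨mem_powerset.2 hCA, hC⟩)

lemma exists_indep_card_eq_rank (A : Finset γ) :
    ∃ C, C ⊆ A ∧ M.Indep C ∧ #C = M.rank A := by
  obtain ⟨C, hC, hcard⟩ := exists_mem_eq_sup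
    (A.powerset.filter fun S => M.Indep S) ⟨∅, by simp [M.indep_empty]⟩ card
  rw [mem_filter, mem_powerset] at hC
  exact ⟨C, hC.1, hC.2, hcard.symm⟩

lemma rank_mono {A B : Finset γ} (h : A ⊆ B) : M.rank A ≤ M.rank B := by
  obtain ⟨C, hCA, hC, hcard⟩ := M.exists_indep_card_eq_rank A
  exact hcard ▸ M.card_le_rank hC (hCA.trans h)

lemma exists_indep_superset_card_eq_rank {I A : Finset γ} (hI : M.Indep I) (hIA : I ⊆ A) :
    ∃ B, I ⊆ B ∧ B ⊆ A ∧ M.Indep B ∧ #B = M.rank A := by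
  obtain ⟨B, hB, hmax⟩ := (A.powerset.filter fun B => I ⊆ B ∧ M.Indep B).exists_max_image card
    ⟨I, by simp [hIA, hI]⟩
  simp only [mem_filter, mem_powerset] at hB hmax
  obtain ⟨hBA, hIB, hBi⟩ := hB
  refine ⟨B, hIB, hBA, hBi, (M.card_le_rank hBi hBA).antisymm (not_lt.1 fun hlt => ?_)⟩
  obtain ⟨C, hCA, hC, hCcard⟩ := M.exists_indep_card_eq_rank A
  obtain ⟨x, hxC, hxB, hx⟩ := M.indep_exchange hBi hC (hCcard ▸ hlt)
  have hle := hmax (insert x B) ⟨insert_subset (hCA hxC) hBA, hIB.trans (subset_insert x B), hx⟩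
  rw [card_insert_of_notMem hxB] at hle
  omega

lemma rank_insert_eq_of_subset {i : γ} {T' T : Finset γ} (hT : T' ⊆ T)
    (h : M.rank (insert i T') = M.rank T') : M.rank (insert i T) = M.rank T := by
  refine le_antisymm (not_lt.1 fun hlt => ?_) (M.rank_mono (subset_insert i T))
  obtain ⟨B', hB'T', hB', hB'card⟩ := M.exists_indep_card_eq_rank T'
  obtain ⟨B, hB'B, hBT, hB, hBcard⟩ :=
    M.exists_indep_superset_card_eq_rank hB' (hB'T'.trans hT)
  obtain ⟨C, hC, hCi, hCcard⟩ := M.exists_indep_card_eq_rank (insert i T)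
  obtain ⟨x, hxC, hxB, hx⟩ := M.indep_exchange hB hCi (by omega)
  rcases mem_insert.1 (hC hxC) with rfl | hxT
  · have hle := M.card_le_rank (M.indep_subset hx (insert_subset_insert x hB'B))
      (insert_subset_insert x hB'T')
    rw [card_insert_of_notMem fun hxB' => hxB (hB'B hxB'), h] at hle
    omega
  · have hle := M.card_le_rank hx (insert_subset hxT hBT)
    rw [card_insert_of_notMem hxB] at hle
    omega

lemma exists_indep_insert_erase_of_rank_insert_eq {B T : Finset γ} {i : γ} (hB : M.Indep B)
    (hi : i ∈ B) (h : M.rank (insert i T) = M.rank T) :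
    ∃ x ∈ T, x ∉ B.erase i ∧ M.Indep (insert x (B.erase i)) := by
  have hspan : M.rank (insert i (T ∪ B.erase i)) = M.rank (T ∪ B.erase i) :=
    M.rank_insert_eq_of_subset subset_union_left h
  have hBsub : B ⊆ insert i (T ∪ B.erase i) :=
    calc B = insert i (B.erase i) := (insert_erase hi).symm
      _ ⊆ insert i (T ∪ B.erase i) := insert_subset_insert i subset_union_right
  have hBle : #B ≤ M.rank (T ∪ B.erase i) := hspan ▸ M.card_le_rank hB hBsub
  obtain ⟨C, hC, hCi, hCcard⟩ := M.exists_indep_card_eq_rank (T ∪ B.erase i)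
  obtain ⟨x, hxC, hxB, hx⟩ := M.indep_exchange (M.indep_subset hB (erase_subset i B)) hCi
    (by have := card_erase_lt_of_mem hi; omega)
  exact ⟨x, (mem_union.1 (hC hxC)).resolve_right hxB, hxB, hx⟩

lemma sum_le_wrank (w : γ → ℝ) {A C : Finset γ} (hC : M.Indep C) (hCA : C ⊆ A) :
    ∑ i ∈ C, w i ≤ M.wrank w A :=
  le_sup' (fun S => ∑ i ∈ S, w i) (mem_filter.2 ⟨mem_powerset.2 hCA, hC⟩)

lemma exists_indep_sum_eq_wrank (w : γ → ℝ) (A : Finset γ) :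
    ∃ B, B ⊆ A ∧ M.Indep B ∧ ∑ i ∈ B, w i = M.wrank w A := by
  obtain ⟨B, hB, hsum⟩ := exists_mem_eq_sup'
    (⟨∅, by simp [M.indep_empty]⟩ : (A.powerset.filter fun S => M.Indep S).Nonempty)
    (fun S => ∑ i ∈ S, w i)
  rw [mem_filter, mem_powerset] at hB
  exact ⟨B, hB.1, hB.2, hsum.symm⟩

lemma sum_mul_sum_indicator_le_sum_mul_wrank (w : γ → ℝ) {B : Finset γ} (hB : M.Indep B)
    {ι : Type*} (s : Finset ι) (q : ι → ℝ) (hq : ∀ x ∈ s, 0 ≤ q x) (R : ι → Finset γ) :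
    ∑ j ∈ B, w j * ∑ x ∈ s, q x * (if j ∈ R x then 1 else 0) ≤
      ∑ x ∈ s, q x * M.wrank w (R x) :=
  calc ∑ j ∈ B, w j * ∑ x ∈ s, q x * (if j ∈ R x then 1 else 0)
      = ∑ x ∈ s, q x * ∑ j ∈ B with j ∈ R x, w j := by
        simp only [mul_sum, sum_filter]
        rw [sum_comm]
        refine sum_congr rfl fun x _ => sum_congr rfl fun j _ => ?_
        split_ifs <;> ring
    _ ≤ ∑ x ∈ s, q x * M.wrank w (R x) := sum_le_sum fun x hx =>
        mul_le_mul_of_nonneg_left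
          (M.sum_le_wrank w (M.indep_subset hB (filter_subset _ B)) fun _ hj =>
            (mem_filter.1 hj).2) (hq x hx)

lemma mem_OPT_univ_of_forall_sum_le (w : γ → ℝ) {B : Finset γ} (hB : M.Indep B)
    (hmax : ∀ C, M.Indep C → ∑ j ∈ C, w j ≤ ∑ j ∈ B, w j) {i : γ} (hi : i ∈ B) (hwi : 0 < w i) :
    i ∈ M.OPT w univ := by
  simp only [OPT, mem_filter, mem_univ, true_and]
  refine ⟨hwi, (M.rank_mono (subset_insert _ _)).lt_of_ne fun h => ?_⟩
  obtain ⟨x, hxT, hxB, hx⟩ := M.exists_indep_insert_erase_of_rank_insert_eq hB hi h.symm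
  have hwx : w i < w x := (mem_filter.1 hxT).2
  have hle := hmax _ hx
  rw [sum_insert hxB, ← add_sum_erase _ _ hi] at hle
  linarith

lemma mem_improving_iff (w : γ → ℝ) {i : γ} (hi : i ∈ M.OPT w univ) (S : Finset γ) :
    i ∈ M.Improving w S ↔ i ∉ S := by
  simp only [OPT, mem_filter, mem_univ, true_and] at hi
  simp only [Improving, mem_filter, mem_univ, true_and]
  refine and_iff_left ?_
  have hheavier : (insert i S).filter (fun j => w i < w j) = S.filter fun j => w i < w j := by
    rw [filter_insert, if_neg (lt_irrefl _)]
  refine mem_filter.2 ⟨mem_insert_self i S, hi.1, ?_⟩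
  rw [hheavier]
  refine (M.rank_mono (subset_insert _ _)).lt_of_ne fun h => ?_
  exact hi.2.ne' (M.rank_insert_eq_of_subset (filter_subset_filter _ (subset_univ S)) h.symm)

end FinMatroid

lemma sum_prodP_filter_notMem (p : ℝ) (i : γ) :
    ∑ S : Finset γ with i ∉ S, prodP p S = 1 - p := by
  have hfilter : (univ.filter fun S : Finset γ => i ∉ S) = (univ.erase i).powerset := by
    ext S
    simp [subset_erase]
  have hcard : Fintype.card γ = #(univ.erase i) + 1 := by
    rw [card_erase_of_mem (mem_univ i), card_univ,
      Nat.sub_add_cancel (Fintype.card_pos_iff.2 ⟨i⟩)]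
  rw [hfilter]
  calc ∑ S ∈ (univ.erase i).powerset, prodP p S
      = (1 - p) * ∑ S ∈ (univ.erase i).powerset, p ^ #S * (1 - p) ^ (#(univ.erase i) - #S) := by
        rw [mul_sum]
        refine sum_congr rfl fun S hS => ?_
        rw [prodP, hcard, Nat.succ_sub (card_le_card (mem_powerset.1 hS)), pow_succ]
        ring
    _ = 1 - p := by rw [sum_pow_mul_eq_add_pow, add_sub_cancel, one_pow, mul_one]

theorem stmt12_general (M : FinMatroid γ) (w : γ → ℝ) (hw : ∀ i, 0 ≤ w i)
    (p : ℝ) (hp0 : 0 < p) (hp1 : p < 1) :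
    (∀ i ∈ M.OPT w Finset.univ,
      ∑ S : Finset γ, prodP p S * (if i ∈ M.Improving w S then (1 : ℝ) else 0) = 1 - p) ∧
    ∑ S : Finset γ, prodP p S * M.wrank w (M.Improving w S) ≥
      (1 - p) * M.wrank w Finset.univ := by
  have hmarg : ∀ i ∈ M.OPT w univ,
      ∑ S : Finset γ, prodP p S * (if i ∈ M.Improving w S then (1 : ℝ) else 0) = 1 - p := by
    intro i hi
    simp_rw [M.mem_improving_iff w hi, mul_ite, mul_one, mul_zero, ← sum_filter]
    exact sum_prodP_filter_notMem p i
  refine ⟨hmarg, ?_⟩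
  obtain ⟨B, -, hB, hBw⟩ := M.exists_indep_sum_eq_wrank w univ
  have hBmax : ∀ C, M.Indep C → ∑ j ∈ C, w j ≤ ∑ j ∈ B, w j := fun C hC =>
    hBw ▸ M.sum_le_wrank w hC (subset_univ C)
  calc (1 - p) * M.wrank w univ = ∑ j ∈ B, w j * (1 - p) := by rw [← hBw, mul_comm, sum_mul]
    _ = ∑ j ∈ B, w j * ∑ S : Finset γ, prodP p S * (if j ∈ M.Improving w S then 1 else 0) :=
        sum_congr rfl fun j hj => by
          rcases (hw j).eq_or_lt with h0 | hpos
          · simp [← h0]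
          · rw [hmarg j (M.mem_OPT_univ_of_forall_sum_le w hB hBmax hj hpos)]
    _ ≤ ∑ S : Finset γ, prodP p S * M.wrank w (M.Improving w S) :=
        M.sum_mul_sum_indicator_le_sum_mul_wrank w hB univ (prodP p)
          (fun S _ => mul_nonneg (pow_nonneg hp0.le _) (pow_nonneg (by linarith) _))
          (M.Improving w)

/-- each element of the max-weight basis is improving with probability
exactly `1 - p`, hence `E[rank_w(R)] ≥ (1-p) · rank_w(M)`. -/
theorem stmt12 (M : FinMatroid γ) (w : γ → ℝ) (hw : ∀ i, 0 ≤ w i)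
    (hinj : Function.Injective w) (p : ℝ) (hp0 : 0 < p) (hp1 : p < 1) :
    (∀ i ∈ M.OPT w Finset.univ,
      ∑ S : Finset γ, prodP p S * (if i ∈ M.Improving w S then (1 : ℝ) else 0) = 1 - p) ∧
    ∑ S : Finset γ, prodP p S * M.wrank w (M.Improving w S) ≥
      (1 - p) * M.wrank w Finset.univ :=
  stmt12_general M w hw p hp0 hp1
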